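/- The even linear map γ̃₀(f) = m_{η̄₁η̄₂(f)} (multiplication by η̄₁η̄₂(f)) is a 1-cocycle of 𝔬𝔰𝔭(2|2) with values in 𝔇_{0,0}: for all homogeneous f, g ∈ 𝔬𝔰𝔭(2|2), f·γ̃₀(g) − (−1)^{|f||g|} g·γ̃₀(f) − γ̃₀({f,g}) = 0 for the (0,0)-action. -/

import Mathlib

noncomputable section

namespace OSP

/-- Smooth real functions. -/
def Smooth (f : ℝ → ℝ) : Prop := ContDiff ℝ ((⊤ : ℕ∞) : WithTop ℕ∞) f

theorem Smooth.const (c : ℝ) : Smooth fun _ => c := contDiff_const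
theorem Smooth.add {f g : ℝ → ℝ} (hf : Smooth f) (hg : Smooth g) :
    Smooth fun x => f x + g x := ContDiff.add hf hg
theorem Smooth.mul {f g : ℝ → ℝ} (hf : Smooth f) (hg : Smooth g) :
    Smooth fun x => f x * g x := ContDiff.mul hf hg
theorem Smooth.neg {f : ℝ → ℝ} (hf : Smooth f) : Smooth fun x => -(f x) := ContDiff.neg hf
theorem Smooth.sub {f g : ℝ → ℝ} (hf : Smooth f) (hg : Smooth g) :
    Smooth fun x => f x - g x := ContDiff.sub hf hg
theorem Smooth.smul (r : ℝ) {f : ℝ → ℝ} (hf : Smooth f) :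
    Smooth fun x => r * f x := (Smooth.const r).mul hf
theorem Smooth.deriv {f : ℝ → ℝ} (hf : Smooth f) : Smooth (deriv f) :=
  (contDiff_infty_iff_deriv.mp hf).2
theorem Smooth.id : Smooth fun x : ℝ => x := contDiff_id

/-- The superalgebra `A = C^∞(ℝ^{1|2})`: elements `f₀ + f₁θ₁ + f₂θ₂ + f₁₂θ₁θ₂`
with smooth coefficients. -/
structure SA where
  c0 : ℝ → ℝ
  c1 : ℝ → ℝ
  c2 : ℝ → ℝ
  c12 : ℝ → ℝ
  h0 : Smooth c0
  h1 : Smooth c1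
  h2 : Smooth c2
  h12 : Smooth c12

namespace SA

instance : Zero SA :=
  ⟨⟨fun _ => 0, fun _ => 0, fun _ => 0, fun _ => 0,
    Smooth.const 0, Smooth.const 0, Smooth.const 0, Smooth.const 0⟩⟩

instance : One SA :=
  ⟨⟨fun _ => 1, fun _ => 0, fun _ => 0, fun _ => 0,
    Smooth.const 1, Smooth.const 0, Smooth.const 0, Smooth.const 0⟩⟩

instance : Add SA :=
  ⟨fun f g => ⟨fun x => f.c0 x + g.c0 x, fun x => f.c1 x + g.c1 x,
    fun x => f.c2 x + g.c2 x, fun x => f.c12 x + g.c12 x,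
    f.h0.add g.h0, f.h1.add g.h1, f.h2.add g.h2, f.h12.add g.h12⟩⟩

instance : Neg SA :=
  ⟨fun f => ⟨fun x => -(f.c0 x), fun x => -(f.c1 x), fun x => -(f.c2 x), fun x => -(f.c12 x),
    f.h0.neg, f.h1.neg, f.h2.neg, f.h12.neg⟩⟩

instance : Sub SA :=
  ⟨fun f g => ⟨fun x => f.c0 x - g.c0 x, fun x => f.c1 x - g.c1 x,
    fun x => f.c2 x - g.c2 x, fun x => f.c12 x - g.c12 x,
    f.h0.sub g.h0, f.h1.sub g.h1, f.h2.sub g.h2, f.h12.sub g.h12⟩⟩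

instance : SMul ℝ SA :=
  ⟨fun r f => ⟨fun x => r * f.c0 x, fun x => r * f.c1 x,
    fun x => r * f.c2 x, fun x => r * f.c12 x,
    f.h0.smul r, f.h1.smul r, f.h2.smul r, f.h12.smul r⟩⟩

/-- Supercommutative product determined by `θᵢθⱼ = -θⱼθᵢ`. -/
instance : Mul SA :=
  ⟨fun f g => ⟨fun x => f.c0 x * g.c0 x,
    fun x => f.c0 x * g.c1 x + f.c1 x * g.c0 x,
    fun x => f.c0 x * g.c2 x + f.c2 x * g.c0 x,
    fun x => f.c0 x * g.c12 x + f.c12 x * g.c0 x + f.c1 x * g.c2 x - f.c2 x * g.c1 x,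
    f.h0.mul g.h0,
    (f.h0.mul g.h1).add (f.h1.mul g.h0),
    (f.h0.mul g.h2).add (f.h2.mul g.h0),
    (((f.h0.mul g.h12).add (f.h12.mul g.h0)).add (f.h1.mul g.h2)).sub (f.h2.mul g.h1)⟩⟩

/-- The even coordinate `x`. -/
def xe : SA := ⟨fun x => x, fun _ => 0, fun _ => 0, fun _ => 0,
  Smooth.id, Smooth.const 0, Smooth.const 0, Smooth.const 0⟩

/-- `x²`. -/
def xsq : SA := ⟨fun x => x * x, fun _ => 0, fun _ => 0, fun _ => 0,
  Smooth.id.mul Smooth.id, Smooth.const 0, Smooth.const 0, Smooth.const 0⟩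

/-- `θ₁`. -/
def th1 : SA := ⟨fun _ => 0, fun _ => 1, fun _ => 0, fun _ => 0,
  Smooth.const 0, Smooth.const 1, Smooth.const 0, Smooth.const 0⟩

/-- `θ₂`. -/
def th2 : SA := ⟨fun _ => 0, fun _ => 0, fun _ => 1, fun _ => 0,
  Smooth.const 0, Smooth.const 0, Smooth.const 1, Smooth.const 0⟩

/-- `xθ₁`. -/
def xth1 : SA := ⟨fun _ => 0, fun x => x, fun _ => 0, fun _ => 0,
  Smooth.const 0, Smooth.id, Smooth.const 0, Smooth.const 0⟩

/-- `xθ₂`. -/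
def xth2 : SA := ⟨fun _ => 0, fun _ => 0, fun x => x, fun _ => 0,
  Smooth.const 0, Smooth.const 0, Smooth.id, Smooth.const 0⟩

/-- `θ₁θ₂`. -/
def th12 : SA := ⟨fun _ => 0, fun _ => 0, fun _ => 0, fun _ => 1,
  Smooth.const 0, Smooth.const 0, Smooth.const 0, Smooth.const 1⟩

/-- The even derivation `∂ₓ` (derivative of the coefficients). -/
def dx (f : SA) : SA := ⟨deriv f.c0, deriv f.c1, deriv f.c2, deriv f.c12,
  f.h0.deriv, f.h1.deriv, f.h2.deriv, f.h12.deriv⟩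

/-- The odd derivation `∂₁ = ∂/∂θ₁`. -/
def d1 (f : SA) : SA := ⟨f.c1, fun _ => 0, f.c12, fun _ => 0,
  f.h1, Smooth.const 0, f.h12, Smooth.const 0⟩

/-- The odd derivation `∂₂ = ∂/∂θ₂`. -/
def d2 (f : SA) : SA := ⟨f.c2, fun x => -(f.c12 x), fun _ => 0, fun _ => 0,
  f.h2, f.h12.neg, Smooth.const 0, Smooth.const 0⟩

/-- `η̄₁ = ∂₁ - θ₁∂ₓ`. -/
def eta1 (f : SA) : SA := d1 f - th1 * dx f

/-- `η̄₂ = ∂₂ - θ₂∂ₓ`. -/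
def eta2 (f : SA) : SA := d2 f - th2 * dx f

/-- `-∂ₓ` (so that `η̄ᵢ^{2j+1} = (-∂ₓ)^j ∘ η̄ᵢ`). -/
def ndx (f : SA) : SA := -(dx f)

/-- `f` is even: no `θ₁`, `θ₂` components. -/
def IsEven (f : SA) : Prop := (∀ x, f.c1 x = 0) ∧ (∀ x, f.c2 x = 0)

/-- `f` is odd: no `1`, `θ₁θ₂` components. -/
def IsOdd (f : SA) : Prop := (∀ x, f.c0 x = 0) ∧ (∀ x, f.c12 x = 0)

/-- The sign `(-1)^p` of a parity `p` (`false` = even, `true` = odd). -/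
def sgn (p : Bool) : ℝ := if p then -1 else 1

/-- `f` is homogeneous of parity `p`. -/
def Homog (p : Bool) (f : SA) : Prop := if p then IsOdd f else IsEven f

/-- The contact (Poisson) bracket `{f,g}` for `f` homogeneous of parity `p`:
`{f,g} = fg' - f'g - ½(-1)^{|f|}(η̄₁(f)η̄₁(g) + η̄₂(f)η̄₂(g))`. -/
def cbr (p : Bool) (f g : SA) : SA :=
  f * dx g - dx f * g - (sgn p / 2) • (eta1 f * eta1 g + eta2 f * eta2 g)

/-- Even part of `f`. -/
def evenPart (f : SA) : SA := ⟨f.c0, fun _ => 0, fun _ => 0, f.c12,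
  f.h0, Smooth.const 0, Smooth.const 0, f.h12⟩

/-- Odd part of `f`. -/
def oddPart (f : SA) : SA := ⟨fun _ => 0, f.c1, f.c2, fun _ => 0,
  Smooth.const 0, f.h1, f.h2, Smooth.const 0⟩

/-- The contact bracket extended bilinearly to all of `A`. -/
def cbrT (f g : SA) : SA := cbr false (evenPart f) g + cbr true (oddPart f) g

/-- Membership in `𝔬𝔰𝔭(2|2) = Span(1, x, x², θ₁, θ₂, xθ₁, xθ₂, θ₁θ₂)`. -/
def memOsp (f : SA) : Prop :=
  ∃ a b c d e p q r : ℝ,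
    f = a • (1 : SA) + b • xe + c • xsq + d • th1 + e • th2
      + p • xth1 + q • xth2 + r • th12

/-- The action `𝔏^λ_f` on λ-densities, for `f` homogeneous of parity `p`. -/
def Ld (lam : ℝ) (p : Bool) (f g : SA) : SA :=
  f * dx g + lam • (dx f * g) - (sgn p / 2) • (eta1 f * eta1 g + eta2 f * eta2 g)

/-- The `(λ,μ)`-action of homogeneous `f` (parity `p`) on a homogeneous operator `T`
(parity `t`): `f·T = 𝔏^μ_f ∘ T - (-1)^{|f||T|} T ∘ 𝔏^λ_f`. -/
def act (lam mu : ℝ) (p t : Bool) (f : SA) (T : SA → SA) : SA → SA :=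
  fun h => Ld mu p f (T h) - sgn (p && t) • T (Ld lam p f h)

/-- The 1-cochain `ω(f) = m_{f'}`. -/
def om (f : SA) : SA → SA := fun h => dx f * h

/-- The 1-cochain
`ω̃_λ(f) = 2λ m_{η̄₁(∂₂f)} - (-1)^{|f|}(m_{∂₂f}∘η̄₁ + m_{θ₂η̄₂η̄₁(f)}∘η̄₂)`. -/
def omt (lam : ℝ) (p : Bool) (f : SA) : SA → SA := fun h =>
  (2 * lam) • (eta1 (d2 f) * h)
    - sgn p • (d2 f * eta1 h + (th2 * eta2 (eta1 f)) * eta2 h)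

/-- The 1-cochain `γ̃₀(f) = m_{η̄₁η̄₂(f)}`. -/
def gamt0 (f : SA) : SA → SA := fun h => eta1 (eta2 f) * h

/-- The 1-cochain `Γ_k(f) = m_{f'}∘η̄₁∘η̄₂^{2k-1}`. -/
def Gam (k : ℕ) (f : SA) : SA → SA := fun h => dx f * eta1 (ndx^[k - 1] (eta2 h))

/-- The 1-cochain
`Γ̃_k(f) = k m_{η̄₁(∂₂f)}∘η̄₁∘η̄₂^{2k-1} - (-1)^{|f|}(m_{∂₂f}∘η̄₂^{2k+1} - m_{η̄₁(θ₂∂₂f)}∘η̄₁^{2k+1})`. -/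
def GamT (k : ℕ) (p : Bool) (f : SA) : SA → SA := fun h =>
  (k : ℝ) • (eta1 (d2 f) * eta1 (ndx^[k - 1] (eta2 h)))
    - sgn p • (d2 f * ndx^[k] (eta2 h) - eta1 (th2 * d2 f) * ndx^[k] (eta1 h))

/-- The 1-cochain
`Γ̄_k(f) = (k-1) m_{f''}∘η̄₁∘η̄₂^{2k-3} + (-1)^{|f|}(m_{η̄₂(f')}∘η̄₁^{2k-1} - m_{η̄₁(f')}∘η̄₂^{2k-1})`
(the first term is absent for `k = 1`, its coefficient being `0`). -/
def GamB (k : ℕ) (p : Bool) (f : SA) : SA → SA := fun h =>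
  ((k : ℝ) - 1) • (dx (dx f) * eta1 (ndx^[k - 2] (eta2 h)))
    + sgn p • (eta2 (dx f) * ndx^[k - 1] (eta1 h) - eta1 (dx f) * ndx^[k - 1] (eta2 h))

/-- An operator on `A` is even if it preserves parities. -/
def OpEven (T : SA → SA) : Prop :=
  (∀ g, IsEven g → IsEven (T g)) ∧ (∀ g, IsOdd g → IsOdd (T g))

/-- An operator on `A` is odd if it reverses parities. -/
def OpOdd (T : SA → SA) : Prop :=
  (∀ g, IsEven g → IsOdd (T g)) ∧ (∀ g, IsOdd g → IsEven (T g))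

/-- An operator is homogeneous of parity `p`. -/
def OpHomog (p : Bool) (T : SA → SA) : Prop := if p then OpOdd T else OpEven T

/-- The monomial differential operator `m_A ∘ ∂ₓ^i ∘ ∂₁^j ∘ ∂₂^l`. -/
def mono (A : SA) (i : ℕ) (j l : Bool) (g : SA) : SA :=
  A * dx^[i] ((if j then d1 else id) ((if l then d2 else id) g))

/-- A differential operator on `A` is a finite sum `Σ m_{A_{ijl}}∘∂ₓ^i∘∂₁^j∘∂₂^l`. -/
def IsDiffOp (T : SA → SA) : Prop :=
  ∃ L : List (SA × ℕ × Bool × Bool),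
    T = fun g => (L.map fun t => mono t.1 t.2.1 t.2.2.1 t.2.2.2 g).sum

/-- Supercommutator `[S,T] = S∘T - (-1)^{|S||T|} T∘S`, with the sign `s = (-1)^{|S||T|}`
given explicitly. -/
def scomm {M : Type*} [Sub M] [SMul ℝ M] (s : ℝ) (S T : M → M) : M → M :=
  fun v => S (T v) - s • T (S v)

/-- Cup product of two even 1-cochains on homogeneous arguments of parities `p`, `q`:
`(a∨b)(f,g) = [a(f),b(g)] + [b(f),a(g)]`. -/
def cup {M : Type*} [Sub M] [SMul ℝ M] [Add M] (p q : Bool)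
    (a b : Bool → SA → M → M) (f g : SA) : M → M :=
  fun v => scomm (sgn (p && q)) (a p f) (b q g) v + scomm (sgn (p && q)) (b p f) (a q g) v

/-! Operators on `𝔉_{-k/2} ⊕ 𝔉_{k/2}`, modelled as `SA × SA`
(first factor `𝔉_{-k/2}`, second factor `𝔉_{k/2}`). -/

/-- `γ_k = ω` acting on the summand `𝔉_{k/2}`, extended by zero. -/
def gamP (_ : Bool) (f : SA) : SA × SA → SA × SA := fun v => (0, om f v.2)

/-- `γ_{-k} = ω` acting on the summand `𝔉_{-k/2}`, extended by zero. -/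
def gamM (_ : Bool) (f : SA) : SA × SA → SA × SA := fun v => (om f v.1, 0)

/-- `γ̃_k = ω̃_{k/2}` acting on the summand `𝔉_{k/2}`, extended by zero. -/
def gamtP (k : ℕ) (p : Bool) (f : SA) : SA × SA → SA × SA :=
  fun v => (0, omt ((k : ℝ) / 2) p f v.2)

/-- `γ̃_{-k} = ω̃_{-k/2}` acting on the summand `𝔉_{-k/2}`, extended by zero. -/
def gamtM (k : ℕ) (p : Bool) (f : SA) : SA × SA → SA × SA :=
  fun v => (omt (-(k : ℝ) / 2) p f v.1, 0)

/-- `Γ_k` viewed as an operator from `𝔉_{-k/2}` to `𝔉_{k/2}`. -/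
def GamP (k : ℕ) (_ : Bool) (f : SA) : SA × SA → SA × SA := fun v => (0, Gam k f v.1)

/-- `Γ̃_k` viewed as an operator from `𝔉_{-k/2}` to `𝔉_{k/2}`. -/
def GamTP (k : ℕ) (p : Bool) (f : SA) : SA × SA → SA × SA := fun v => (0, GamT k p f v.1)

/-- `Γ̄_k` viewed as an operator from `𝔉_{-k/2}` to `𝔉_{k/2}`. -/
def GamBP (k : ℕ) (p : Bool) (f : SA) : SA × SA → SA × SA := fun v => (0, GamB k p f v.1)

/-- The undeformed action `𝕃_f = 𝔏^{-k/2}_f ⊕ 𝔏^{k/2}_f` on `𝔉_{-k/2} ⊕ 𝔉_{k/2}`. -/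
def LL (k : ℕ) (p : Bool) (f : SA) : SA × SA → SA × SA :=
  fun v => (Ld (-(k : ℝ) / 2) p f v.1, Ld ((k : ℝ) / 2) p f v.2)

/-- The action of homogeneous `f` (parity `p`) on a homogeneous operator `T` (parity `t`)
on `𝔉_{-k/2} ⊕ 𝔉_{k/2}`: `f·T = [𝕃_f, T]`. -/
def actP (k : ℕ) (p t : Bool) (f : SA) (T : SA × SA → SA × SA) : SA × SA → SA × SA :=
  fun v => LL k p f (T v) - sgn (p && t) • T (LL k p f v)

/-- Parity predicates on `𝔉_{-k/2} ⊕ 𝔉_{k/2}`. -/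
def IsEvenP (v : SA × SA) : Prop := IsEven v.1 ∧ IsEven v.2

def IsOddP (v : SA × SA) : Prop := IsOdd v.1 ∧ IsOdd v.2

def OpEvenP (T : SA × SA → SA × SA) : Prop :=
  (∀ v, IsEvenP v → IsEvenP (T v)) ∧ (∀ v, IsOddP v → IsOddP (T v))

def OpOddP (T : SA × SA → SA × SA) : Prop :=
  (∀ v, IsEvenP v → IsOddP (T v)) ∧ (∀ v, IsOddP v → IsEvenP (T v))

def OpHomogP (p : Bool) (T : SA × SA → SA × SA) : Prop := if p then OpOddP T else OpEvenP T

/-- A differential-operator-valued endomorphism of `𝔉_{-k/2} ⊕ 𝔉_{k/2}`: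
a 2×2 block matrix of differential operators. -/
def IsDiffOpP (T : SA × SA → SA × SA) : Prop :=
  ∃ T11 T12 T21 T22 : SA → SA,
    IsDiffOp T11 ∧ IsDiffOp T12 ∧ IsDiffOp T21 ∧ IsDiffOp T22 ∧
    T = fun v => (T11 v.1 + T12 v.2, T21 v.1 + T22 v.2)

/-- A differential operator from `𝔉_{-k/2}` to `𝔉_{k/2}`, as an endomorphism of the sum. -/
def IsDiffOpLower (T : SA × SA → SA × SA) : Prop :=
  ∃ D : SA → SA, IsDiffOp D ∧ T = fun v => (0, D v.1)

end SA

end OSP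
namespace OSP
namespace SA


theorem sext : ∀ {f g : SA}, f.c0 = g.c0 → f.c1 = g.c1 → f.c2 = g.c2 → f.c12 = g.c12 → f = g := by
  rintro ⟨f0,f1,f2,f12,_,_,_,_⟩ ⟨g0,g1,g2,g12,_,_,_,_⟩ h0 h1 h2 h12
  simp_all

theorem _root_.OSP.Smooth.diff {f : ℝ → ℝ} (hf : Smooth f) : Differentiable ℝ f :=
  hf.differentiable (by simp)

@[simp] theorem add_c0 (f g : SA) : (f+g).c0 = fun x => f.c0 x + g.c0 x := rfl
@[simp] theorem add_c1 (f g : SA) : (f+g).c1 = fun x => f.c1 x + g.c1 x := rfl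
@[simp] theorem add_c2 (f g : SA) : (f+g).c2 = fun x => f.c2 x + g.c2 x := rfl
@[simp] theorem add_c12 (f g : SA) : (f+g).c12 = fun x => f.c12 x + g.c12 x := rfl
@[simp] theorem sub_c0 (f g : SA) : (f-g).c0 = fun x => f.c0 x - g.c0 x := rfl
@[simp] theorem sub_c1 (f g : SA) : (f-g).c1 = fun x => f.c1 x - g.c1 x := rfl
@[simp] theorem sub_c2 (f g : SA) : (f-g).c2 = fun x => f.c2 x - g.c2 x := rfl
@[simp] theorem sub_c12 (f g : SA) : (f-g).c12 = fun x => f.c12 x - g.c12 x := rfl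
@[simp] theorem neg_c0 (f : SA) : (-f).c0 = fun x => -(f.c0 x) := rfl
@[simp] theorem neg_c1 (f : SA) : (-f).c1 = fun x => -(f.c1 x) := rfl
@[simp] theorem neg_c2 (f : SA) : (-f).c2 = fun x => -(f.c2 x) := rfl
@[simp] theorem neg_c12 (f : SA) : (-f).c12 = fun x => -(f.c12 x) := rfl
@[simp] theorem smul_c0 (r : ℝ) (f : SA) : (r • f).c0 = fun x => r * f.c0 x := rfl
@[simp] theorem smul_c1 (r : ℝ) (f : SA) : (r • f).c1 = fun x => r * f.c1 x := rfl
@[simp] theorem smul_c2 (r : ℝ) (f : SA) : (r • f).c2 = fun x => r * f.c2 x := rfl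
@[simp] theorem smul_c12 (r : ℝ) (f : SA) : (r • f).c12 = fun x => r * f.c12 x := rfl
@[simp] theorem mul_c0 (f g : SA) : (f*g).c0 = fun x => f.c0 x * g.c0 x := rfl
@[simp] theorem mul_c1 (f g : SA) : (f*g).c1 = fun x => f.c0 x * g.c1 x + f.c1 x * g.c0 x := rfl
@[simp] theorem mul_c2 (f g : SA) : (f*g).c2 = fun x => f.c0 x * g.c2 x + f.c2 x * g.c0 x := rfl
@[simp] theorem mul_c12 (f g : SA) :
    (f*g).c12 = fun x =>
      f.c0 x * g.c12 x + f.c12 x * g.c0 x + f.c1 x * g.c2 x - f.c2 x * g.c1 x := rfl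
@[simp] theorem one_c0 : (1:SA).c0 = fun _ => 1 := rfl
@[simp] theorem one_c1 : (1:SA).c1 = fun _ => 0 := rfl
@[simp] theorem one_c2 : (1:SA).c2 = fun _ => 0 := rfl
@[simp] theorem one_c12 : (1:SA).c12 = fun _ => 0 := rfl
@[simp] theorem dx_c0 (f : SA) : (dx f).c0 = deriv f.c0 := rfl
@[simp] theorem dx_c1 (f : SA) : (dx f).c1 = deriv f.c1 := rfl
@[simp] theorem dx_c2 (f : SA) : (dx f).c2 = deriv f.c2 := rfl
@[simp] theorem dx_c12 (f : SA) : (dx f).c12 = deriv f.c12 := rfl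
@[simp] theorem d1_c0 (f : SA) : (d1 f).c0 = f.c1 := rfl
@[simp] theorem d1_c1 (f : SA) : (d1 f).c1 = fun _ => 0 := rfl
@[simp] theorem d1_c2 (f : SA) : (d1 f).c2 = f.c12 := rfl
@[simp] theorem d1_c12 (f : SA) : (d1 f).c12 = fun _ => 0 := rfl
@[simp] theorem d2_c0 (f : SA) : (d2 f).c0 = f.c2 := rfl
@[simp] theorem d2_c1 (f : SA) : (d2 f).c1 = fun x => -(f.c12 x) := rfl
@[simp] theorem d2_c2 (f : SA) : (d2 f).c2 = fun _ => 0 := rfl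
@[simp] theorem d2_c12 (f : SA) : (d2 f).c12 = fun _ => 0 := rfl
@[simp] theorem xe_c0 : xe.c0 = fun x => x := rfl
@[simp] theorem xe_c1 : xe.c1 = fun _ => 0 := rfl
@[simp] theorem xe_c2 : xe.c2 = fun _ => 0 := rfl
@[simp] theorem xe_c12 : xe.c12 = fun _ => 0 := rfl
@[simp] theorem xsq_c0 : xsq.c0 = fun x => x * x := rfl
@[simp] theorem xsq_c1 : xsq.c1 = fun _ => 0 := rfl
@[simp] theorem xsq_c2 : xsq.c2 = fun _ => 0 := rfl
@[simp] theorem xsq_c12 : xsq.c12 = fun _ => 0 := rfl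
@[simp] theorem th1_c0 : th1.c0 = fun _ => 0 := rfl
@[simp] theorem th1_c1 : th1.c1 = fun _ => 1 := rfl
@[simp] theorem th1_c2 : th1.c2 = fun _ => 0 := rfl
@[simp] theorem th1_c12 : th1.c12 = fun _ => 0 := rfl
@[simp] theorem th2_c0 : th2.c0 = fun _ => 0 := rfl
@[simp] theorem th2_c1 : th2.c1 = fun _ => 0 := rfl
@[simp] theorem th2_c2 : th2.c2 = fun _ => 1 := rfl
@[simp] theorem th2_c12 : th2.c12 = fun _ => 0 := rfl
@[simp] theorem xth1_c0 : xth1.c0 = fun _ => 0 := rfl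
@[simp] theorem xth1_c1 : xth1.c1 = fun x => x := rfl
@[simp] theorem xth1_c2 : xth1.c2 = fun _ => 0 := rfl
@[simp] theorem xth1_c12 : xth1.c12 = fun _ => 0 := rfl
@[simp] theorem xth2_c0 : xth2.c0 = fun _ => 0 := rfl
@[simp] theorem xth2_c1 : xth2.c1 = fun _ => 0 := rfl
@[simp] theorem xth2_c2 : xth2.c2 = fun x => x := rfl
@[simp] theorem xth2_c12 : xth2.c12 = fun _ => 0 := rfl
@[simp] theorem th12_c0 : th12.c0 = fun _ => 0 := rfl
@[simp] theorem th12_c1 : th12.c1 = fun _ => 0 := rfl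
@[simp] theorem th12_c2 : th12.c2 = fun _ => 0 := rfl
@[simp] theorem th12_c12 : th12.c12 = fun _ => 1 := rfl

/-- canonical even osp element -/
def mkE (a b c r : ℝ) : SA :=
  ⟨fun x => a + b*x + c*(x*x), fun _ => 0, fun _ => 0, fun _ => r,
   ((Smooth.const a).add ((Smooth.const b).mul Smooth.id)).add
     ((Smooth.const c).mul (Smooth.id.mul Smooth.id)),
   Smooth.const 0, Smooth.const 0, Smooth.const r⟩

/-- canonical odd osp element -/
def mkO (d e u v : ℝ) : SA :=
  ⟨fun _ => 0, fun x => d + u*x, fun x => e + v*x, fun _ => 0,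
   Smooth.const 0,
   (Smooth.const d).add ((Smooth.const u).mul Smooth.id),
   (Smooth.const e).add ((Smooth.const v).mul Smooth.id),
   Smooth.const 0⟩

@[simp] theorem mkE_c0 (a b c r : ℝ) : (mkE a b c r).c0 = fun x => a + b*x + c*(x*x) := rfl
@[simp] theorem mkE_c1 (a b c r : ℝ) : (mkE a b c r).c1 = fun _ => 0 := rfl
@[simp] theorem mkE_c2 (a b c r : ℝ) : (mkE a b c r).c2 = fun _ => 0 := rfl
@[simp] theorem mkE_c12 (a b c r : ℝ) : (mkE a b c r).c12 = fun _ => r := rfl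
@[simp] theorem mkO_c0 (d e u v : ℝ) : (mkO d e u v).c0 = fun _ => 0 := rfl
@[simp] theorem mkO_c1 (d e u v : ℝ) : (mkO d e u v).c1 = fun x => d + u*x := rfl
@[simp] theorem mkO_c2 (d e u v : ℝ) : (mkO d e u v).c2 = fun x => e + v*x := rfl
@[simp] theorem mkO_c12 (d e u v : ℝ) : (mkO d e u v).c12 = fun _ => 0 := rfl

theorem even_form (a b c r : ℝ) :
    a • (1:SA) + b • xe + c • xsq + (0:ℝ) • th1 + (0:ℝ) • th2
      + (0:ℝ) • xth1 + (0:ℝ) • xth2 + r • th12 = mkE a b c r := by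
  refine sext ?_ ?_ ?_ ?_ <;> funext x <;> simp

theorem odd_form (d e u v : ℝ) :
    (0:ℝ) • (1:SA) + (0:ℝ) • xe + (0:ℝ) • xsq + d • th1 + e • th2
      + u • xth1 + v • xth2 + (0:ℝ) • th12 = mkO d e u v := by
  refine sext ?_ ?_ ?_ ?_ <;> funext x <;> simp

@[simp] theorem sgn_false : sgn false = 1 := rfl
@[simp] theorem sgn_true : sgn true = -1 := rfl

theorem deriv_constf (k : ℝ) : deriv (fun _ : ℝ => k) = fun _ => 0 := by
  funext x; simp

theorem deriv_idf : deriv (fun x : ℝ => x) = fun _ => 1 := by funext x; simp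

theorem deriv_cmulf (u : ℝ) : deriv (fun x : ℝ => u * x) = fun _ => u := by
  funext x
  have h : HasDerivAt (fun x : ℝ => u*x) (0 * x + u * 1) x :=
    (hasDerivAt_const x u).mul (hasDerivAt_id x)
  rw [h.deriv]; ring

theorem deriv_linf (d u : ℝ) : deriv (fun x : ℝ => d + u*x) = fun _ => u := by
  funext x
  have h : HasDerivAt (fun x : ℝ => d + u*x) (0 + (0 * x + u * 1)) x :=
    (hasDerivAt_const x d).add ((hasDerivAt_const x u).mul (hasDerivAt_id x))
  rw [h.deriv]; ring

theorem deriv_quadf (a b c : ℝ) :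
    deriv (fun x : ℝ => a + b*x + c*(x*x)) = fun x => b + 2*c*x := by
  funext x
  have h : HasDerivAt (fun x : ℝ => a + b*x + c*(x*x))
      (0 + (0 * x + b * 1) + (0 * (x*x) + c * (1 * x + x * 1))) x :=
    ((hasDerivAt_const x a).add ((hasDerivAt_const x b).mul (hasDerivAt_id x))).add
      ((hasDerivAt_const x c).mul ((hasDerivAt_id x).mul (hasDerivAt_id x)))
  rw [h.deriv]; ring

theorem deriv_lin2f (b c : ℝ) : deriv (fun x : ℝ => b + 2*c*x) = fun _ => 2*c := by
  funext x
  have h : HasDerivAt (fun x : ℝ => b + 2*c*x) (0 + (0 * x + 2*c * 1)) x :=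
    (hasDerivAt_const x b).add ((hasDerivAt_const x (2*c)).mul (hasDerivAt_id x))
  rw [h.deriv]; ring

@[simp] theorem eta1_c0 (f : SA) : (eta1 f).c0 = f.c1 := by funext x; simp [eta1]
@[simp] theorem eta1_c1 (f : SA) : (eta1 f).c1 = fun x => -(deriv f.c0 x) := by
  funext x; simp [eta1]
@[simp] theorem eta1_c2 (f : SA) : (eta1 f).c2 = f.c12 := by funext x; simp [eta1]
@[simp] theorem eta1_c12 (f : SA) : (eta1 f).c12 = fun x => -(deriv f.c2 x) := by
  funext x; simp [eta1]
@[simp] theorem eta2_c0 (f : SA) : (eta2 f).c0 = f.c2 := by funext x; simp [eta2]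
@[simp] theorem eta2_c1 (f : SA) : (eta2 f).c1 = fun x => -(f.c12 x) := by
  funext x; simp [eta2]
@[simp] theorem eta2_c2 (f : SA) : (eta2 f).c2 = fun x => -(deriv f.c0 x) := by
  funext x; simp [eta2]
@[simp] theorem eta2_c12 (f : SA) : (eta2 f).c12 = deriv f.c1 := by funext x; simp [eta2]

@[simp] theorem dx_mkE (a b c r : ℝ) : dx (mkE a b c r) = mkE b (2*c) 0 0 := by
  refine sext ?_ ?_ ?_ ?_ <;>
    simp [dx, deriv_quadf, deriv_constf, deriv_cmulf, deriv_idf] <;> funext x <;> ring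
@[simp] theorem dx_mkO (d e u v : ℝ) : dx (mkO d e u v) = mkO u v 0 0 := by
  refine sext ?_ ?_ ?_ ?_ <;>
    simp [dx, deriv_linf, deriv_constf, deriv_cmulf, deriv_idf] <;> funext x <;> ring
@[simp] theorem eta1_mkE (a b c r : ℝ) : eta1 (mkE a b c r) = mkO (-b) r (-(2*c)) 0 := by
  refine sext ?_ ?_ ?_ ?_ <;>
    simp [deriv_quadf, deriv_constf, deriv_cmulf, deriv_idf] <;> funext x <;> ring
@[simp] theorem eta2_mkE (a b c r : ℝ) : eta2 (mkE a b c r) = mkO (-r) (-b) 0 (-(2*c)) := by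
  refine sext ?_ ?_ ?_ ?_ <;>
    simp [deriv_quadf, deriv_constf, deriv_cmulf, deriv_idf] <;> funext x <;> ring
@[simp] theorem eta1_mkO (d e u v : ℝ) : eta1 (mkO d e u v) = mkE d u 0 (-v) := by
  refine sext ?_ ?_ ?_ ?_ <;>
    simp [deriv_linf, deriv_constf, deriv_cmulf, deriv_idf] <;> funext x <;> ring
@[simp] theorem eta2_mkO (d e u v : ℝ) : eta2 (mkO d e u v) = mkE e v 0 u := by
  refine sext ?_ ?_ ?_ ?_ <;>
    simp [deriv_linf, deriv_constf, deriv_cmulf, deriv_idf] <;> funext x <;> ring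


set_option maxHeartbeats 2000000 in
/-- `γ̃₀(f) = m_{η̄₁η̄₂(f)}` is a 1-cocycle of `𝔬𝔰𝔭(2|2)` with values
in `𝔇_{0,0}`. -/
theorem gamt0_is_cocycle :
    ∀ (p q : Bool) (f g : SA),
      Homog p f → Homog q g → memOsp f → memOsp g →
      ∀ h : SA,
        act 0 0 p q f (gamt0 g) h - sgn (p && q) • act 0 0 q p g (gamt0 f) h
          = gamt0 (cbr p f g) h := by
  rintro p q f g hf hg ⟨a,b,c,d,e,u,v,r,rfl⟩ ⟨a',b',c',d',e',u',v',r',rfl⟩ h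
  have H0 : Differentiable ℝ h.c0 := h.h0.diff
  have H1 : Differentiable ℝ h.c1 := h.h1.diff
  have H2 : Differentiable ℝ h.c2 := h.h2.diff
  have H12 : Differentiable ℝ h.c12 := h.h12.diff
  have HD0 : Differentiable ℝ (deriv h.c0) := h.h0.deriv.diff
  have HD1 : Differentiable ℝ (deriv h.c1) := h.h1.deriv.diff
  have HD2 : Differentiable ℝ (deriv h.c2) := h.h2.deriv.diff
  have HD12 : Differentiable ℝ (deriv h.c12) := h.h12.deriv.diff
  simp only [Homog, Bool.false_eq_true, if_false, if_true, IsEven, IsOdd] at hf hg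
  cases p <;> cases q <;> simp at hf hg
  · obtain ⟨hf1,hf2⟩ := hf
    have hhfd : d = 0 := by simpa using hf1 0
    have hhfu : u = 0 := by have hh := hf1 1; rw [hhfd] at hh; simpa using hh
    have hhfe : e = 0 := by simpa using hf2 0
    have hhfv : v = 0 := by have hh := hf2 1; rw [hhfe] at hh; simpa using hh
    subst hhfd hhfu hhfe hhfv
    obtain ⟨hg1,hg2⟩ := hg
    have hhgd : d' = 0 := by simpa using hg1 0
    have hhgu : u' = 0 := by have hh := hg1 1; rw [hhgd] at hh; simpa using hh
    have hhge : e' = 0 := by simpa using hg2 0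
    have hhgv : v' = 0 := by have hh := hg2 1; rw [hhge] at hh; simpa using hh
    subst hhgd hhgu hhge hhgv
    rw [even_form, even_form]
    refine sext ?_ ?_ ?_ ?_ <;> funext x <;>
      simp (disch := fun_prop) only [act, Ld, gamt0, cbr,
        dx_mkE, dx_mkO, eta1_mkE, eta2_mkE, eta1_mkO, eta2_mkO,
        add_c0, add_c1, add_c2, add_c12, sub_c0, sub_c1, sub_c2, sub_c12, neg_c0, neg_c1, neg_c2, neg_c12, smul_c0, smul_c1, smul_c2, smul_c12, mul_c0, mul_c1, mul_c2, mul_c12, dx_c0, dx_c1, dx_c2, dx_c12, eta1_c0, eta1_c1, eta1_c2, eta1_c12, eta2_c0, eta2_c1, eta2_c2, eta2_c12, mkE_c0, mkE_c1, mkE_c2, mkE_c12, mkO_c0, mkO_c1, mkO_c2, mkO_c12,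
        sgn_false, sgn_true, Bool.false_and, Bool.and_false, Bool.true_and, Bool.and_true,
        deriv_constf, deriv_linf, deriv_quadf, deriv_lin2f, deriv_idf, deriv_cmulf,
        deriv_fun_add, deriv_fun_mul, deriv_fun_sub, deriv.fun_neg', deriv_const', deriv_id'',
        mul_zero, zero_mul, add_zero, zero_add, mul_one, one_mul,
        neg_zero, sub_zero, zero_sub, neg_neg] <;>
      ring
  · obtain ⟨hf1,hf2⟩ := hf
    have hhfd : d = 0 := by simpa using hf1 0
    have hhfu : u = 0 := by have hh := hf1 1; rw [hhfd] at hh; simpa using hh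
    have hhfe : e = 0 := by simpa using hf2 0
    have hhfv : v = 0 := by have hh := hf2 1; rw [hhfe] at hh; simpa using hh
    subst hhfd hhfu hhfe hhfv
    obtain ⟨hg1,hg2⟩ := hg
    have hhga : a' = 0 := by simpa using hg1 0
    have hp1 := hg1 1
    have hm1 := hg1 (-1)
    rw [hhga] at hp1 hm1
    simp at hp1 hm1
    have hhgb : b' = 0 := by nlinarith [hp1, hm1]
    have hhgc : c' = 0 := by nlinarith [hp1, hm1]
    subst hhga hhgb hhgc
    subst hg2
    rw [even_form, odd_form]
    refine sext ?_ ?_ ?_ ?_ <;> funext x <;>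
      simp (disch := fun_prop) only [act, Ld, gamt0, cbr,
        dx_mkE, dx_mkO, eta1_mkE, eta2_mkE, eta1_mkO, eta2_mkO,
        add_c0, add_c1, add_c2, add_c12, sub_c0, sub_c1, sub_c2, sub_c12, neg_c0, neg_c1, neg_c2, neg_c12, smul_c0, smul_c1, smul_c2, smul_c12, mul_c0, mul_c1, mul_c2, mul_c12, dx_c0, dx_c1, dx_c2, dx_c12, eta1_c0, eta1_c1, eta1_c2, eta1_c12, eta2_c0, eta2_c1, eta2_c2, eta2_c12, mkE_c0, mkE_c1, mkE_c2, mkE_c12, mkO_c0, mkO_c1, mkO_c2, mkO_c12,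
        sgn_false, sgn_true, Bool.false_and, Bool.and_false, Bool.true_and, Bool.and_true,
        deriv_constf, deriv_linf, deriv_quadf, deriv_lin2f, deriv_idf, deriv_cmulf,
        deriv_fun_add, deriv_fun_mul, deriv_fun_sub, deriv.fun_neg', deriv_const', deriv_id'',
        mul_zero, zero_mul, add_zero, zero_add, mul_one, one_mul,
        neg_zero, sub_zero, zero_sub, neg_neg] <;>
      ring
  · obtain ⟨hf1,hf2⟩ := hf
    have hhfa : a = 0 := by simpa using hf1 0
    have hp1 := hf1 1
    have hm1 := hf1 (-1)
    rw [hhfa] at hp1 hm1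
    simp at hp1 hm1
    have hhfb : b = 0 := by nlinarith [hp1, hm1]
    have hhfc : c = 0 := by nlinarith [hp1, hm1]
    subst hhfa hhfb hhfc
    subst hf2
    obtain ⟨hg1,hg2⟩ := hg
    have hhgd : d' = 0 := by simpa using hg1 0
    have hhgu : u' = 0 := by have hh := hg1 1; rw [hhgd] at hh; simpa using hh
    have hhge : e' = 0 := by simpa using hg2 0
    have hhgv : v' = 0 := by have hh := hg2 1; rw [hhge] at hh; simpa using hh
    subst hhgd hhgu hhge hhgv
    rw [odd_form, even_form]
    refine sext ?_ ?_ ?_ ?_ <;> funext x <;>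
      simp (disch := fun_prop) only [act, Ld, gamt0, cbr,
        dx_mkE, dx_mkO, eta1_mkE, eta2_mkE, eta1_mkO, eta2_mkO,
        add_c0, add_c1, add_c2, add_c12, sub_c0, sub_c1, sub_c2, sub_c12, neg_c0, neg_c1, neg_c2, neg_c12, smul_c0, smul_c1, smul_c2, smul_c12, mul_c0, mul_c1, mul_c2, mul_c12, dx_c0, dx_c1, dx_c2, dx_c12, eta1_c0, eta1_c1, eta1_c2, eta1_c12, eta2_c0, eta2_c1, eta2_c2, eta2_c12, mkE_c0, mkE_c1, mkE_c2, mkE_c12, mkO_c0, mkO_c1, mkO_c2, mkO_c12,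
        sgn_false, sgn_true, Bool.false_and, Bool.and_false, Bool.true_and, Bool.and_true,
        deriv_constf, deriv_linf, deriv_quadf, deriv_lin2f, deriv_idf, deriv_cmulf,
        deriv_fun_add, deriv_fun_mul, deriv_fun_sub, deriv.fun_neg', deriv_const', deriv_id'',
        mul_zero, zero_mul, add_zero, zero_add, mul_one, one_mul,
        neg_zero, sub_zero, zero_sub, neg_neg] <;>
      ring
  · obtain ⟨hf1,hf2⟩ := hf
    have hhfa : a = 0 := by simpa using hf1 0
    have hp1 := hf1 1
    have hm1 := hf1 (-1)
    rw [hhfa] at hp1 hm1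
    simp at hp1 hm1
    have hhfb : b = 0 := by nlinarith [hp1, hm1]
    have hhfc : c = 0 := by nlinarith [hp1, hm1]
    subst hhfa hhfb hhfc
    subst hf2
    obtain ⟨hg1,hg2⟩ := hg
    have hhga : a' = 0 := by simpa using hg1 0
    have hp1 := hg1 1
    have hm1 := hg1 (-1)
    rw [hhga] at hp1 hm1
    simp at hp1 hm1
    have hhgb : b' = 0 := by nlinarith [hp1, hm1]
    have hhgc : c' = 0 := by nlinarith [hp1, hm1]
    subst hhga hhgb hhgc
    subst hg2
    rw [odd_form, odd_form]
    refine sext ?_ ?_ ?_ ?_ <;> funext x <;>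
      simp (disch := fun_prop) only [act, Ld, gamt0, cbr,
        dx_mkE, dx_mkO, eta1_mkE, eta2_mkE, eta1_mkO, eta2_mkO,
        add_c0, add_c1, add_c2, add_c12, sub_c0, sub_c1, sub_c2, sub_c12, neg_c0, neg_c1, neg_c2, neg_c12, smul_c0, smul_c1, smul_c2, smul_c12, mul_c0, mul_c1, mul_c2, mul_c12, dx_c0, dx_c1, dx_c2, dx_c12, eta1_c0, eta1_c1, eta1_c2, eta1_c12, eta2_c0, eta2_c1, eta2_c2, eta2_c12, mkE_c0, mkE_c1, mkE_c2, mkE_c12, mkO_c0, mkO_c1, mkO_c2, mkO_c12,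
        sgn_false, sgn_true, Bool.false_and, Bool.and_false, Bool.true_and, Bool.and_true,
        deriv_constf, deriv_linf, deriv_quadf, deriv_lin2f, deriv_idf, deriv_cmulf,
        deriv_fun_add, deriv_fun_mul, deriv_fun_sub, deriv.fun_neg', deriv_const', deriv_id'',
        mul_zero, zero_mul, add_zero, zero_add, mul_one, one_mul,
        neg_zero, sub_zero, zero_sub, neg_neg] <;>
      ring

end SA
end OSP
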